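/- arXiv:0903.0369 — 5 statements merged into one kernel-verified Lean document; each statement's English description precedes it below -/
import Mathlib

section
/- Let f be a homeomorphism of the open unit disk 𝔻. If there exists a closed chain (X_i)_{i∈ℤ/rℤ} for f consisting of pairwise disjoint, free, path-connected, nonempty subsets of 𝔻, then f is recurrent, i.e. there exists a closed chain for f consisting of pairwise disjoint free open disks. (Proposition 1.4, case (i).) -/
open Set Filter Metric Topology

noncomputable section

/-- The open unit disk in the complex plane. -/
abbrev Disk : Set ℂ := Metric.ball 0 1

/-- The `k`-th iterate (`k ∈ ℤ`) of a homeomorphism of the open unit disk. -/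
def fiter (f : ↥Disk ≃ₜ ↥Disk) (k : ℤ) : ↥Disk → ↥Disk := fun z => (f.toEquiv ^ k) z

/-- A subset `X` of the disk is free for `f` if `f(X) ∩ X = ∅`. -/
def IsFreeSet (f : ↥Disk ≃ₜ ↥Disk) (X : Set ↥Disk) : Prop := (⇑f '' X) ∩ X = ∅

/-- An open disk: an open subset of `Disk` homeomorphic to `Disk`. -/
def IsOpenDisk (U : Set ↥Disk) : Prop := IsOpen U ∧ Nonempty (↥U ≃ₜ ↥Disk)

/-- `f` is recurrent: there is a closed chain of pairwise disjoint free open disks. -/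
def RecurrentHomeo (f : ↥Disk ≃ₜ ↥Disk) : Prop :=
  ∃ r : ℕ, 1 ≤ r ∧ ∃ X : ZMod r → Set ↥Disk,
    (∀ i, IsOpenDisk (X i)) ∧ (∀ i, IsFreeSet f (X i)) ∧
    (Pairwise fun i j => Disjoint (X i) (X j)) ∧
    (∀ i, ∃ k : ℤ, 1 ≤ k ∧ ((fiter f k '' X i) ∩ X (i + 1)).Nonempty)

/-!
Inside each `X i`, join the point where the chain enters `X i` to the point where it leaves
by a path. The resulting arcs are compact, pairwise disjoint and free, so they have pairwise
disjoint free open neighbourhoods `V i`, and it remains to find an open disk in `V i`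
containing both endpoints of the arc. In a connected open subset of a Banach space, the points
that share an open cell with a fixed point form a clopen set: a point can be pushed to any
nearby point by a homeomorphism supported in a small ball.
-/

open Function
open scoped NNReal

section Cell

variable {E : Type*} [NormedAddCommGroup E]

def IsOpenCell (U : Set E) : Prop := IsOpen U ∧ Nonempty (U ≃ₜ ball (0 : E) 1)

def JoinedByCellIn (V : Set E) (y w : E) : Prop := ∃ U ⊆ V, IsOpenCell U ∧ y ∈ U ∧ w ∈ U

theorem IsOpenCell.image {U : Set E} (hU : IsOpenCell U) (h : E ≃ₜ E) : IsOpenCell (h '' U) :=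
  ⟨h.isOpenMap U hU.1, ⟨(h.image U).symm.trans hU.2.some⟩⟩

variable [NormedSpace ℝ E]

theorem isOpenCell_ball (c : E) {r : ℝ} (hr : 0 < r) : IsOpenCell (ball c r) :=
  ⟨isOpen_ball,
    ⟨(Homeomorph.setCongr (OpenPartialHomeomorph.unitBallBall_target c r hr)).symm.trans
      ((OpenPartialHomeomorph.unitBallBall c r hr).toHomeomorphSourceTarget.symm.trans
        (Homeomorph.setCongr (OpenPartialHomeomorph.unitBallBall_source c r hr)))⟩⟩

theorem joinedByCellIn_self {V : Set E} (hV : IsOpen V) {y : E} (hy : y ∈ V) :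
    JoinedByCellIn V y y := by
  obtain ⟨ε, hε, hεV⟩ := isOpen_iff.1 hV y hy
  exact ⟨ball y ε, hεV, isOpenCell_ball y hε, mem_ball_self hε, mem_ball_self hε⟩

variable [CompleteSpace E]

theorem exists_homeomorph_push (a b : E) :
    ∃ h : E ≃ₜ E, h a = b ∧ ∀ z, 2 * dist a b ≤ dist z a → h z = z := by
  rcases eq_or_ne a b with rfl | hab
  · exact ⟨.refl E, rfl, fun _ _ => rfl⟩
  set R := 2 * dist a b
  have hR : 0 < R := mul_pos two_pos (dist_pos.2 hab)
  set ψ : E → ℝ := fun z => max (1 - dist z a / R) 0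
  have hψ : ∀ x y, |ψ x - ψ y| ≤ dist x y / R := fun x y => by
    refine (abs_max_sub_max_le_abs _ _ _).trans ?_
    rw [sub_sub_sub_cancel_left, ← sub_div, abs_div, abs_of_pos hR]
    gcongr
    exact (abs_dist_sub_le y x a).trans_eq (dist_comm y x)
  let id' : E ≃L[ℝ] E := .refl ℝ E
  have happrox : ApproximatesLinearOn (fun z => z + ψ z • (b - a)) (id' : E →L[ℝ] E) univ
      (1 / 2) := by
    intro x _ y _
    have hba : ‖b - a‖ = R / 2 := by rw [← dist_eq_norm, dist_comm]; ring
    calc ‖x + ψ x • (b - a) - (y + ψ y • (b - a)) - (id' : E →L[ℝ] E) (x - y)‖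
        = |ψ x - ψ y| * ‖b - a‖ := by
          rw [← Real.norm_eq_abs, ← norm_smul, sub_smul]
          congr 1
          simp only [id', ContinuousLinearEquiv.coe_coe, ContinuousLinearEquiv.refl_apply]
          abel
      _ ≤ dist x y / R * (R / 2) := by rw [hba]; gcongr; exact hψ x y
      _ = (1 / 2 : ℝ≥0) * ‖x - y‖ := by rw [dist_eq_norm]; push_cast; field_simp
  have hc : Subsingleton E ∨ (1 / 2 : ℝ≥0) < ‖(id'.symm : E →L[ℝ] E)‖₊⁻¹ := by
    have : Nontrivial E := ⟨⟨a, b, hab⟩⟩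
    right
    simp only [id', ContinuousLinearEquiv.refl_symm, ContinuousLinearEquiv.coe_refl,
      ContinuousLinearMap.nnnorm_id]
    norm_num
  refine ⟨happrox.toHomeomorph _ hc, ?_, fun z hz => ?_⟩
  · show a + ψ a • (b - a) = b
    simp [ψ]
  · show z + ψ z • (b - a) = z
    have : ψ z = 0 := max_eq_right <| by rw [sub_nonpos, one_le_div hR]; exact hz
    simp [this]

/-- If `y` lies in the support `ball w (2 * dist w w')` of the push from `w` to `w'`, then `w'`
is within `3 * dist w w'` of `y` and a round ball does the job. -/
theorem JoinedByCellIn.of_ball_subset {V : Set E} {y w w' : E} (h : JoinedByCellIn V y w)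
    (hV : ball w (5 * dist w w') ⊆ V) : JoinedByCellIn V y w' := by
  obtain ⟨U, hUV, hU, hyU, hwU⟩ := h
  obtain ⟨p, hpw, hp⟩ := exists_homeomorph_push w w'
  by_cases hyw : 2 * dist w w' ≤ dist y w
  · have hpV : p '' U ⊆ V := by
      rintro _ ⟨z, hz, rfl⟩
      by_cases hpz : dist (p z) w < 2 * dist w w'
      · exact hV (by rw [mem_ball]; linarith [dist_nonneg (x := w) (y := w')])
      · rw [p.injective (hp (p z) (not_lt.1 hpz))]
        exact hUV hz
    exact ⟨p '' U, hpV, hU.image p, ⟨y, hyU, hp y hyw⟩, ⟨w, hwU, hpw⟩⟩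
  · have hd : 0 < dist w w' := by linarith [dist_nonneg (x := y) (y := w)]
    refine ⟨ball y (3 * dist w w'), fun z hz => hV ?_, isOpenCell_ball y (by positivity),
      mem_ball_self (by positivity), ?_⟩
    · rw [mem_ball] at hz ⊢
      linarith [dist_triangle z y w]
    · rw [mem_ball]
      linarith [dist_triangle w' w y, dist_comm w w', dist_comm y w]

theorem IsPreconnected.joinedByCellIn {V C : Set E} (hV : IsOpen V) (hC : IsPreconnected C)
    (hCV : C ⊆ V) {y w : E} (hy : y ∈ C) (hw : w ∈ C) : JoinedByCellIn V y w := by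
  have hopen : IsOpen {w | JoinedByCellIn V y w} := by
    refine isOpen_iff_forall_mem_open.2 fun w ⟨U, hUV, hU, hyU, hwU⟩ => ⟨U, ?_, hU.1, hwU⟩
    exact fun z hz => ⟨U, hUV, hU, hyU, hz⟩
  have hopen' : IsOpen {w | w ∈ V ∧ ¬JoinedByCellIn V y w} := by
    refine isOpen_iff.2 fun w ⟨hwV, hw⟩ => ?_
    obtain ⟨ε, hε, hεV⟩ := isOpen_iff.1 hV w hwV
    refine ⟨ε / 6, by positivity, fun w' hw' =>
      ⟨hεV (ball_subset_ball (by linarith) hw'), ?_⟩⟩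
    refine fun h => hw (h.of_ball_subset ((ball_subset_ball' ?_).trans hεV))
    rw [mem_ball] at hw'
    linarith [dist_comm w w']
  refine hC.subset_left_of_subset_union hopen hopen' ?_ ?_
    ⟨y, hy, joinedByCellIn_self hV (hCV hy)⟩ hw
  · exact Set.disjoint_left.2 fun w hw hw' => hw'.2 hw
  · exact fun z hz => (em (JoinedByCellIn V y z)).elim Or.inl fun h => Or.inr ⟨hCV hz, h⟩

end Cell

section Separation

variable {X : Type*} [TopologicalSpace X] [T2Space X]

theorem exists_isOpen_superset_pairwise_disjoint {ι : Type*} [Finite ι] {K : ι → Set X}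
    (hK : ∀ i, IsCompact (K i)) (hd : Pairwise (Disjoint on K)) :
    ∃ V : ι → Set X, (∀ i, IsOpen (V i) ∧ K i ⊆ V i) ∧ Pairwise (Disjoint on V) :=
  (hd.mono fun i j h => (SeparatedNhds.of_isCompact_isCompact (hK i) (hK j) h).disjoint_nhdsSet
    ).exists_mem_filter_basis_of_disjoint fun i => hasBasis_nhdsSet (K i)

theorem exists_isOpen_superset_disjoint_image {f : X → X} (hf : Continuous f) {K : Set X}
    (hK : IsCompact K) (h : Disjoint (f '' K) K) :
    ∃ V, IsOpen V ∧ K ⊆ V ∧ Disjoint (f '' V) V := by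
  obtain ⟨A, B, hA, hB, hKA, hKB, hAB⟩ :=
    SeparatedNhds.of_isCompact_isCompact (hK.image hf) hK h
  refine ⟨B ∩ f ⁻¹' A, hB.inter (hA.preimage hf),
    subset_inter hKB (image_subset_iff.1 hKA), ?_⟩
  exact hAB.mono (image_subset_iff.2 inter_subset_right) inter_subset_left

end Separation

theorem IsPathConnected.exists_isCompact_isPreconnected {X : Type*} [TopologicalSpace X]
    {S : Set X} (hS : IsPathConnected S) {a b : X} (ha : a ∈ S) (hb : b ∈ S) :
    ∃ K ⊆ S, IsCompact K ∧ IsPreconnected K ∧ a ∈ K ∧ b ∈ K := by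
  obtain ⟨γ, hγ⟩ := hS.joinedIn a ha b hb
  exact ⟨range γ, range_subset_iff.2 hγ, isCompact_range γ.continuous,
    isPreconnected_range γ.continuous, ⟨0, γ.source⟩, ⟨1, γ.target⟩⟩

theorem isFreeSet_iff_disjoint {f : Disk ≃ₜ Disk} {X : Set Disk} :
    IsFreeSet f X ↔ Disjoint (f '' X) X :=
  disjoint_iff_inter_eq_empty.symm

theorem IsOpenCell.isOpenDisk_preimage_val {U : Set ℂ} (hU : IsOpenCell U) (hUD : U ⊆ Disk) :
    IsOpenDisk (Subtype.val ⁻¹' U : Set Disk) := by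
  refine ⟨hU.1.preimage continuous_subtype_val, ⟨Homeomorph.trans ?_ hU.2.some⟩⟩
  exact { toFun := fun z => ⟨z.1.1, z.2⟩
          invFun := fun w => ⟨⟨w.1, hUD w.2⟩, w.2⟩
          left_inv := fun _ => rfl
          right_inv := fun _ => rfl }

theorem exists_isOpenDisk_subset {V C : Set Disk} (hV : IsOpen V) (hC : IsPreconnected C)
    (hCV : C ⊆ V) {a b : Disk} (ha : a ∈ C) (hb : b ∈ C) :
    ∃ W ⊆ V, IsOpenDisk W ∧ a ∈ W ∧ b ∈ W := by
  obtain ⟨U, hUV, hU, haU, hbU⟩ :=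
    (hC.image _ continuous_subtype_val.continuousOn).joinedByCellIn
      (isOpen_ball.isOpenMap_subtype_val V hV) (image_mono hCV) (mem_image_of_mem _ ha)
      (mem_image_of_mem _ hb)
  refine ⟨Subtype.val ⁻¹' U, ?_,
    hU.isOpenDisk_preimage_val (hUV.trans (Subtype.coe_image_subset _ _)), haU, hbU⟩
  rw [← preimage_image_eq V Subtype.val_injective]
  exact preimage_mono hUV

theorem handel_prop_1_4_i_general (f : ↥Disk ≃ₜ ↥Disk) (r : ℕ) (hr : 1 ≤ r)
    (X : ZMod r → Set ↥Disk)
    (hfree : ∀ i, IsFreeSet f (X i))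
    (hpath : ∀ i, IsPathConnected (X i))
    (hdisj : Pairwise fun i j => Disjoint (X i) (X j))
    (hchain : ∀ i, ∃ k : ℤ, 1 ≤ k ∧ ((fiter f k '' X i) ∩ X (i + 1)).Nonempty) :
    RecurrentHomeo f := by
  have : NeZero r := ⟨by omega⟩
  choose k hk w hw using hchain
  choose a haX hwa using fun i => (hw i).1
  have hbX : ∀ i, w (i - 1) ∈ X i := fun i => by simpa using (hw (i - 1)).2
  choose K hKX hK hKconn haK hbK using
    fun i => (hpath i).exists_isCompact_isPreconnected (haX i) (hbX i)
  obtain ⟨V, hV, hVdisj⟩ := exists_isOpen_superset_pairwise_disjoint hK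
    fun i j hij => (hdisj hij).mono (hKX i) (hKX j)
  choose W hW hKW hWfree using fun i =>
    exists_isOpen_superset_disjoint_image f.continuous (hK i)
      ((isFreeSet_iff_disjoint.1 (hfree i)).mono (image_mono (hKX i)) (hKX i))
  choose D hDVW hD haD hbD using fun i => exists_isOpenDisk_subset ((hV i).1.inter (hW i))
    (hKconn i) (subset_inter (hV i).2 (hKW i)) (haK i) (hbK i)
  refine ⟨r, hr, D, hD, fun i => isFreeSet_iff_disjoint.2 ?_, fun i j hij => ?_, fun i => ?_⟩
  · exact (hWfree i).mono (image_mono ((hDVW i).trans inter_subset_right))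
      ((hDVW i).trans inter_subset_right)
  · exact (hVdisj hij).mono ((hDVW i).trans inter_subset_left)
      ((hDVW j).trans inter_subset_left)
  · exact ⟨k i, hk i, w i, ⟨a i, haD i, hwa i⟩, by simpa using hbD (i + 1)⟩

/-- Proposition 1.4, case (i): a closed chain of pairwise disjoint, free,
path-connected, nonempty subsets forces recurrence. -/
theorem handel_prop_1_4_i (f : ↥Disk ≃ₜ ↥Disk) (r : ℕ) (hr : 1 ≤ r)
    (X : ZMod r → Set ↥Disk)
    (hfree : ∀ i, IsFreeSet f (X i))
    (hpath : ∀ i, IsPathConnected (X i))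
    (hne : ∀ i, (X i).Nonempty)
    (hdisj : Pairwise fun i j => Disjoint (X i) (X j))
    (hchain : ∀ i, ∃ k : ℤ, 1 ≤ k ∧ ((fiter f k '' X i) ∩ X (i + 1)).Nonempty) :
    RecurrentHomeo f :=
  handel_prop_1_4_i_general f r hr X hfree hpath hdisj hchain
end
end

section
/- Let f be a homeomorphism of the open unit disk 𝔻, let z ∈ 𝔻 satisfy f^q(z) ≠ z for every integer q ≥ 1, and let Γ : ℝ → 𝔻 be a continuous map such that for every k ∈ ℤ: Γ(k) = f^k(z); the restriction of Γ to [k, k+1] is injective; f(Γ([k,k+1])) ∩ Γ([k,k+1]) = {f^{k+1}(z)}; and f(Γ([k,k+1])) ∩ Γ([k',k'+1]) = ∅ for every k' < k. Then for all real numbers t and t' with t' ≤ t one has f(Γ(t)) ≠ Γ(t'). (Proposition 3.5.) -/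
open Set Filter Metric Topology

noncomputable section

/-! Split by the unit segments `[⌊t⌋, ⌊t⌋ + 1]` containing `t` and `t'`. For different
segments, `f(Γ t) = Γ t'` contradicts the disjointness from earlier segments; within one
segment it forces `Γ t' = Γ (⌊t⌋ + 1)`, so `t' = ⌊t'⌋ + 1` by injectivity, which is absurd. -/
theorem mem_Icc_floor (t : ℝ) : t ∈ Icc (⌊t⌋ : ℝ) (⌊t⌋ + 1) :=
  ⟨Int.floor_le t, (Int.lt_floor_add_one t).le⟩

section

variable {α : Type*} {g : α → α} {Γ : ℝ → α} {t t' : ℝ}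

theorem apply_ne_of_floor_lt
    (hpast : ∀ k k' : ℤ, k' < k →
      (g '' (Γ '' Icc (k : ℝ) (k + 1))) ∩ (Γ '' Icc (k' : ℝ) (k' + 1)) = ∅)
    (h : ⌊t'⌋ < ⌊t⌋) : g (Γ t) ≠ Γ t' := fun heq => by
  have hmem : Γ t' ∈ (g '' (Γ '' Icc (⌊t⌋ : ℝ) (⌊t⌋ + 1))) ∩ (Γ '' Icc (⌊t'⌋ : ℝ) (⌊t'⌋ + 1)) :=
    ⟨⟨Γ t, mem_image_of_mem Γ (mem_Icc_floor t), heq⟩,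
      mem_image_of_mem Γ (mem_Icc_floor t')⟩
  simp [hpast _ _ h] at hmem

theorem apply_ne_of_floor_eq (hinj : ∀ k : ℤ, InjOn Γ (Icc (k : ℝ) (k + 1)))
    (hself : ∀ k : ℤ,
      (g '' (Γ '' Icc (k : ℝ) (k + 1))) ∩ (Γ '' Icc (k : ℝ) (k + 1)) ⊆ {Γ (k + 1)})
    (h : ⌊t'⌋ = ⌊t⌋) : g (Γ t) ≠ Γ t' := fun heq => by
  set k := ⌊t⌋
  have ht' : t' ∈ Icc (k : ℝ) (k + 1) := h ▸ mem_Icc_floor t'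
  have hend : Γ t' = Γ (k + 1) :=
    hself k ⟨⟨Γ t, mem_image_of_mem Γ (mem_Icc_floor t), heq⟩, mem_image_of_mem Γ ht'⟩
  have ht'_eq : t' = k + 1 := hinj k ht' (right_mem_Icc.2 (by linarith)) hend
  have := Int.lt_floor_add_one t'
  rw [h] at this
  linarith

end

theorem handel_prop_3_5_general (f : ↥Disk ≃ₜ ↥Disk) (z : ↥Disk)
    (Γ : ℝ → ↥Disk)
    (hk : ∀ k : ℤ, Γ (k : ℝ) = fiter f k z)
    (hinj : ∀ k : ℤ, Set.InjOn Γ (Set.Icc (k : ℝ) (k + 1)))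
    (hself : ∀ k : ℤ,
      (⇑f '' (Γ '' Set.Icc (k : ℝ) (k + 1))) ∩ (Γ '' Set.Icc (k : ℝ) (k + 1)) =
        {fiter f (k + 1) z})
    (hpast : ∀ k k' : ℤ, k' < k →
      (⇑f '' (Γ '' Set.Icc (k : ℝ) (k + 1))) ∩ (Γ '' Set.Icc (k' : ℝ) (k' + 1)) = ∅) :
    ∀ t t' : ℝ, t' ≤ t → f (Γ t) ≠ Γ t' := by
  intro t t' hle
  have hself' : ∀ k : ℤ,
      (f '' (Γ '' Icc (k : ℝ) (k + 1))) ∩ (Γ '' Icc (k : ℝ) (k + 1)) ⊆ {Γ (k + 1)} := by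
    intro k
    rw [hself k, ← hk (k + 1), Int.cast_add, Int.cast_one]
  rcases (Int.floor_le_floor hle).lt_or_eq with h | h
  · exact apply_ne_of_floor_lt hpast h
  · exact apply_ne_of_floor_eq hinj hself' h

/-- Proposition 3.5. -/
theorem handel_prop_3_5 (f : ↥Disk ≃ₜ ↥Disk) (z : ↥Disk)
    (hz : ∀ q : ℤ, 1 ≤ q → fiter f q z ≠ z)
    (Γ : ℝ → ↥Disk) (hc : Continuous Γ)
    (hk : ∀ k : ℤ, Γ (k : ℝ) = fiter f k z)
    (hinj : ∀ k : ℤ, Set.InjOn Γ (Set.Icc (k : ℝ) (k + 1)))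
    (hself : ∀ k : ℤ,
      (⇑f '' (Γ '' Set.Icc (k : ℝ) (k + 1))) ∩ (Γ '' Set.Icc (k : ℝ) (k + 1)) =
        {fiter f (k + 1) z})
    (hpast : ∀ k k' : ℤ, k' < k →
      (⇑f '' (Γ '' Set.Icc (k : ℝ) (k + 1))) ∩ (Γ '' Set.Icc (k' : ℝ) (k' + 1)) = ∅) :
    ∀ t t' : ℝ, t' ≤ t → f (Γ t) ≠ Γ t' :=
  handel_prop_3_5_general f z Γ hk hinj hself hpast
end
end

section
/- There exists a family (X_p)_{p∈ℕ} of countable dense subsets of ℝ² with the following properties, where for each p, Ξ_p denotes the set of affine lines of ℝ² containing at least two points of X_p: (i) if p ≠ p' then Ξ_p ∩ Ξ_{p'} = ∅; (ii) if p, p', p'' are pairwise distinct, then Δ ∩ Δ' ∩ Δ'' = ∅ for every Δ ∈ Ξ_p, Δ' ∈ Ξ_{p'}, Δ'' ∈ Ξ_{p''}. (Lemma 4.3.) -/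
open Set

noncomputable section

/-- An affine line of `ℝ²`. -/
def IsAffineLine (L : Set (ℝ × ℝ)) : Prop :=
  ∃ a v : ℝ × ℝ, v ≠ 0 ∧ L = {p | ∃ t : ℝ, p = a + t • v}

/-- The set of affine lines containing at least two points of `X`. -/
def linesThrough (X : Set (ℝ × ℝ)) : Set (Set (ℝ × ℝ)) :=
  {L | IsAffineLine L ∧ ∃ p ∈ X ∩ L, ∃ q ∈ X ∩ L, p ≠ q}

/-!
Take `X_p = ℚ² + p • (α, α²)` with `α` transcendental. A line through two points of `X_p` has a
rational direction `d`, and `cross d (x - p • (α, α²))` is rational for every point `x` of it.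
Because `1, α, α²` are linearly independent over `ℚ`, a rational linear relation `∑ cᵢ • dᵢ = 0`
between the directions of lines from the grids `X_{pᵢ}` through a common point forces
`∑ (cᵢ * pᵢ) • dᵢ = 0` as well. For two parallel lines this gives `p₁ = p₂`; for three lines with
pairwise non-parallel directions, the relation `∑ cross dⱼ dₖ • dᵢ = 0` leads to `p₂ = p₃`.
-/

def cross {R : Type*} [CommRing R] (u v : R × R) : R := u.1 * v.2 - u.2 * v.1

lemma exists_eq_smul_of_cross_eq_zero {K : Type*} [Field K] {u v : K × K} (hu : u ≠ 0)
    (h : cross u v = 0) : ∃ k : K, v = k • u := by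
  unfold cross at h
  by_cases h₁ : u.1 = 0
  · have h₂ : u.2 ≠ 0 := fun h₂ => hu (Prod.ext h₁ h₂)
    refine ⟨v.2 / u.2, Prod.ext ?_ ?_⟩
    · have : v.1 = 0 := by simpa [h₁, h₂] using h
      simp [h₁, this]
    · simp [h₂]
  · refine ⟨v.1 / u.1, Prod.ext ?_ ?_⟩
    · simp [h₁]
    · simp only [Prod.smul_snd, smul_eq_mul]
      field_simp
      linear_combination h

lemma IsAffineLine.cross_sub_eq_zero {L : Set (ℝ × ℝ)} (hL : IsAffineLine L) {P Q R S : ℝ × ℝ}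
    (hP : P ∈ L) (hQ : Q ∈ L) (hR : R ∈ L) (hS : S ∈ L) : cross (Q - P) (S - R) = 0 := by
  obtain ⟨a, v, -, rfl⟩ := hL
  obtain ⟨t₁, rfl⟩ := hP
  obtain ⟨t₂, rfl⟩ := hQ
  obtain ⟨t₃, rfl⟩ := hR
  obtain ⟨t₄, rfl⟩ := hS
  simp only [cross, Prod.fst_sub, Prod.snd_sub, Prod.fst_add, Prod.snd_add, Prod.smul_fst,
    Prod.smul_snd, smul_eq_mul]
  ring

lemma linearIndependent_one_self_sq {α : ℝ} (hα : Transcendental ℚ α) :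
    LinearIndependent ℚ ![1, α, α ^ 2] := by
  rw [Fintype.linearIndependent_iff]
  intro g hg
  have hp : Polynomial.aeval α (Polynomial.C (g 0) + Polynomial.C (g 1) * Polynomial.X
      + Polynomial.C (g 2) * Polynomial.X ^ 2) = 0 := by
    simpa [Fin.sum_univ_three, Algebra.smul_def] using hg
  have h0 := transcendental_iff.mp hα _ hp
  intro i
  fin_cases i
  · simpa using congrArg (Polynomial.coeff · 0) h0
  · simpa using congrArg (Polynomial.coeff · 1) h0
  · simpa using congrArg (Polynomial.coeff · 2) h0

lemma exists_transcendental : ∃ α : ℝ, Transcendental ℚ α := by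
  have := IsLocalization.isAlgebraic ℚ (nonZeroDivisors ℤ)
  exact ⟨_, (transcendental_liouvilleNumber le_rfl).extendScalars ℚ⟩

def ratToReal : ℚ × ℚ → ℝ × ℝ := Prod.map (↑) (↑)

@[simp]
lemma ratToReal_fst (r : ℚ × ℚ) : (ratToReal r).1 = r.1 := rfl

@[simp]
lemma ratToReal_snd (r : ℚ × ℚ) : (ratToReal r).2 = r.2 := rfl

lemma cross_ratToReal (u v : ℚ × ℚ) : cross (ratToReal u) (ratToReal v) = cross u v := by
  simp [cross]

lemma cross_sum_smul {ι : Type*} (s : Finset ι) (c : ι → ℚ) (d : ι → ℚ × ℚ) (x : ℝ × ℝ) :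
    cross (ratToReal (∑ i ∈ s, c i • d i)) x = ∑ i ∈ s, c i * cross (ratToReal (d i)) x := by
  simp only [cross, ratToReal_fst, ratToReal_snd, Prod.fst_sum, Prod.snd_sum, Prod.smul_fst,
    Prod.smul_snd, smul_eq_mul, Rat.cast_sum, Rat.cast_mul, Finset.sum_mul,
    ← Finset.sum_sub_distrib]
  exact Finset.sum_congr rfl fun _ _ => by ring

lemma cross_sub_smul (u : ℚ × ℚ) (x y : ℝ × ℝ) (t : ℝ) :
    cross (ratToReal u) (x - t • y) = cross (ratToReal u) x - t * cross (ratToReal u) y := by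
  simp only [cross, Prod.fst_sub, Prod.snd_sub, Prod.smul_fst, Prod.smul_snd, smul_eq_mul]
  ring

def ratGrid (γ : ℝ × ℝ) (q : ℚ) : Set (ℝ × ℝ) := range fun r => ratToReal r + (q : ℝ) • γ

lemma countable_ratGrid (γ : ℝ × ℝ) (q : ℚ) : (ratGrid γ q).Countable :=
  countable_range _

lemma dense_ratGrid (γ : ℝ × ℝ) (q : ℚ) : Dense (ratGrid γ q) :=
  (Homeomorph.addRight ((q : ℝ) • γ)).surjective.denseRange.comp
    (Rat.denseRange_cast.prodMap Rat.denseRange_cast) (continuous_add_const _)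

section

variable {γ : ℝ × ℝ}

lemma exists_direction_of_mem_linesThrough {q : ℚ} {Δ : Set (ℝ × ℝ)}
    (hΔ : Δ ∈ linesThrough (ratGrid γ q)) :
    ∃ d : ℚ × ℚ, d ≠ 0 ∧ (∃ P ∈ Δ, ∃ Q ∈ Δ, ratToReal d = Q - P) ∧
      ∃ e : ℚ, ∀ x ∈ Δ, cross (ratToReal d) (x - (q : ℝ) • γ) = e := by
  obtain ⟨hL, _, ⟨⟨r, rfl⟩, hP⟩, _, ⟨⟨s, rfl⟩, hQ⟩, hne⟩ := hΔ
  have hd : ratToReal (s - r) = ratToReal s + (q : ℝ) • γ - (ratToReal r + (q : ℝ) • γ) := by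
    ext <;> simp
  refine ⟨s - r, fun h => hne (by rw [sub_eq_zero.mp h]), ⟨_, hP, _, hQ, hd⟩, cross (s - r) r,
    fun x hx => ?_⟩
  have h := hL.cross_sub_eq_zero hP hQ hP hx
  rw [← hd] at h
  unfold cross at h ⊢
  simp only [ratToReal_fst, ratToReal_snd, Prod.fst_sub, Prod.snd_sub, Prod.fst_add,
    Prod.snd_add, Prod.smul_fst, Prod.smul_snd, smul_eq_mul, Rat.cast_sub, Rat.cast_mul] at h ⊢
  linear_combination h

lemma eq_zero_of_cross_eq_ratCast (hγ : LinearIndependent ℚ ![1, γ.1, γ.2])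
    {v : ℚ × ℚ} {e : ℚ} (h : cross (ratToReal v) γ = e) : v = 0 := by
  have := Fintype.linearIndependent_iff.mp hγ ![-e, -v.2, v.1]
    (by simp [Fin.sum_univ_three, ← h, cross, Rat.smul_def]; ring)
  exact Prod.ext (by simpa using this 2) (by simpa using this 1)

lemma sum_mul_smul_eq_zero (hγ : LinearIndependent ℚ ![1, γ.1, γ.2]) {ι : Type*} [Fintype ι]
    {x : ℝ × ℝ} {d : ι → ℚ × ℚ} {q e : ι → ℚ}
    (hx : ∀ i, cross (ratToReal (d i)) (x - (q i : ℝ) • γ) = e i) {c : ι → ℚ}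
    (hc : ∑ i, c i • d i = 0) : ∑ i, (c i * q i) • d i = 0 := by
  have hx' i : cross (ratToReal (d i)) x = e i + q i * cross (ratToReal (d i)) γ := by
    rw [← hx, cross_sub_smul]; ring
  have h0 : ∑ i, (c i : ℝ) * (e i + q i * cross (ratToReal (d i)) γ) = 0 := by
    simp_rw [← hx', ← cross_sum_smul, hc]
    simp [cross]
  refine eq_zero_of_cross_eq_ratCast hγ (e := -∑ i, c i * e i) ?_
  calc cross (ratToReal (∑ i, (c i * q i) • d i)) γ
      = ∑ i, (c i : ℝ) * (e i + q i * cross (ratToReal (d i)) γ) - ∑ i, (c i : ℝ) * e i := by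
        rw [cross_sum_smul, ← Finset.sum_sub_distrib]
        exact Finset.sum_congr rfl fun _ _ => by push_cast; ring
    _ = _ := by rw [h0]; push_cast; ring

lemma eq_of_concurrent_of_cross_eq_zero (hγ : LinearIndependent ℚ ![1, γ.1, γ.2])
    {d d' : ℚ × ℚ} (hd : d ≠ 0) (hd' : d' ≠ 0) (hdd' : cross d d' = 0) {x : ℝ × ℝ} {q q' e e' : ℚ}
    (hx : cross (ratToReal d) (x - (q : ℝ) • γ) = e)
    (hx' : cross (ratToReal d') (x - (q' : ℝ) • γ) = e') : q = q' := by
  obtain ⟨k, rfl⟩ := exists_eq_smul_of_cross_eq_zero hd hdd'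
  have hk : k ≠ 0 := by rintro rfl; simp at hd'
  have h := sum_mul_smul_eq_zero hγ (d := ![d, k • d]) (q := ![q, q']) (e := ![e, e'])
    (c := ![k, -1]) (Fin.forall_fin_two.mpr ⟨hx, hx'⟩) (by simp [Fin.sum_univ_two])
  simp only [Fin.sum_univ_two, Matrix.cons_val_zero, Matrix.cons_val_one, smul_smul,
    ← add_smul, smul_eq_zero, hd, or_false] at h
  have : k * (q - q') = 0 := by linear_combination h
  simpa [hk, sub_eq_zero] using this

lemma false_of_concurrent (hγ : LinearIndependent ℚ ![1, γ.1, γ.2]) {d₁ d₂ d₃ : ℚ × ℚ}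
    (hd₁ : d₁ ≠ 0) (hd₂ : d₂ ≠ 0) (hd₃ : d₃ ≠ 0) {q₁ q₂ q₃ e₁ e₂ e₃ : ℚ} (h₁₂ : q₁ ≠ q₂)
    (h₁₃ : q₁ ≠ q₃) (h₂₃ : q₂ ≠ q₃) {x : ℝ × ℝ}
    (hx₁ : cross (ratToReal d₁) (x - (q₁ : ℝ) • γ) = e₁)
    (hx₂ : cross (ratToReal d₂) (x - (q₂ : ℝ) • γ) = e₂)
    (hx₃ : cross (ratToReal d₃) (x - (q₃ : ℝ) • γ) = e₃) : False := by
  have hc₁₂ : cross d₁ d₂ ≠ 0 := fun h =>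
    h₁₂ (eq_of_concurrent_of_cross_eq_zero hγ hd₁ hd₂ h hx₁ hx₂)
  have hc₃₁ : cross d₃ d₁ ≠ 0 := fun h =>
    h₁₃ (eq_of_concurrent_of_cross_eq_zero hγ hd₃ hd₁ h hx₃ hx₁).symm
  have h := sum_mul_smul_eq_zero hγ (d := ![d₁, d₂, d₃]) (q := ![q₁, q₂, q₃])
    (e := ![e₁, e₂, e₃]) (c := ![cross d₂ d₃, cross d₃ d₁, cross d₁ d₂])
    (Fin.forall_fin_succ.mpr ⟨hx₁, Fin.forall_fin_two.mpr ⟨hx₂, hx₃⟩⟩)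
    (by ext <;> simp [Fin.sum_univ_three, cross] <;> ring)
  have : cross d₃ d₁ * cross d₁ d₂ * (q₂ - q₃) = 0 := by
    have := congrArg (cross d₁) h
    simp only [cross, Fin.sum_univ_three, Matrix.cons_val_zero, Matrix.cons_val_one,
      Matrix.cons_val, Prod.snd_add, Prod.smul_snd, smul_eq_mul, Prod.fst_add, Prod.smul_fst,
      Prod.snd_zero, mul_zero, Prod.fst_zero, sub_self] at this
    unfold cross
    linear_combination this
  simp [hc₁₂, hc₃₁, sub_eq_zero, h₂₃] at this

lemma linesThrough_ratGrid_inter_eq_empty (hγ : LinearIndependent ℚ ![1, γ.1, γ.2]) {q q' : ℚ}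
    (hqq' : q ≠ q') : linesThrough (ratGrid γ q) ∩ linesThrough (ratGrid γ q') = ∅ := by
  refine eq_empty_of_forall_notMem fun Δ ⟨hΔ, hΔ'⟩ => hqq' ?_
  obtain ⟨d, hd, ⟨P, hP, Q, hQ, hPQ⟩, e, he⟩ := exists_direction_of_mem_linesThrough hΔ
  obtain ⟨d', hd', ⟨P', hP', Q', hQ', hPQ'⟩, e', he'⟩ := exists_direction_of_mem_linesThrough hΔ'
  have hdd' : cross d d' = 0 := by
    have := hΔ.1.cross_sub_eq_zero hP hQ hP' hQ'
    rwa [← hPQ, ← hPQ', cross_ratToReal, Rat.cast_eq_zero] at this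
  exact eq_of_concurrent_of_cross_eq_zero hγ hd hd' hdd' (he P hP) (he' P hP)

lemma inter_inter_eq_empty_of_mem_linesThrough_ratGrid (hγ : LinearIndependent ℚ ![1, γ.1, γ.2])
    {q₁ q₂ q₃ : ℚ} (h₁₂ : q₁ ≠ q₂) (h₁₃ : q₁ ≠ q₃) (h₂₃ : q₂ ≠ q₃) {Δ₁ Δ₂ Δ₃ : Set (ℝ × ℝ)}
    (hΔ₁ : Δ₁ ∈ linesThrough (ratGrid γ q₁)) (hΔ₂ : Δ₂ ∈ linesThrough (ratGrid γ q₂))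
    (hΔ₃ : Δ₃ ∈ linesThrough (ratGrid γ q₃)) : Δ₁ ∩ Δ₂ ∩ Δ₃ = ∅ := by
  refine eq_empty_of_forall_notMem fun x ⟨⟨hx₁, hx₂⟩, hx₃⟩ => ?_
  obtain ⟨d₁, hd₁, -, e₁, he₁⟩ := exists_direction_of_mem_linesThrough hΔ₁
  obtain ⟨d₂, hd₂, -, e₂, he₂⟩ := exists_direction_of_mem_linesThrough hΔ₂
  obtain ⟨d₃, hd₃, -, e₃, he₃⟩ := exists_direction_of_mem_linesThrough hΔ₃
  exact false_of_concurrent hγ hd₁ hd₂ hd₃ h₁₂ h₁₃ h₂₃ (he₁ x hx₁) (he₂ x hx₂) (he₃ x hx₃)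

end

/-- Lemma 4.3. -/
theorem handel_lem_4_3 :
    ∃ X : ℕ → Set (ℝ × ℝ),
      (∀ p, (X p).Countable ∧ Dense (X p)) ∧
      (∀ p p', p ≠ p' → linesThrough (X p) ∩ linesThrough (X p') = ∅) ∧
      (∀ p p' p'', p ≠ p' → p ≠ p'' → p' ≠ p'' →
        ∀ Δ ∈ linesThrough (X p), ∀ Δ' ∈ linesThrough (X p'),
          ∀ Δ'' ∈ linesThrough (X p''), Δ ∩ Δ' ∩ Δ'' = ∅) := by
  obtain ⟨α, hα⟩ := exists_transcendental
  have hγ : LinearIndependent ℚ ![1, (α, α ^ 2).1, (α, α ^ 2).2] := linearIndependent_one_self_sq hα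
  have hcast : Function.Injective ((↑) : ℕ → ℚ) := Nat.cast_injective
  refine ⟨fun p => ratGrid (α, α ^ 2) p, fun p => ⟨countable_ratGrid _ _, dense_ratGrid _ _⟩,
    fun p p' h => linesThrough_ratGrid_inter_eq_empty hγ (hcast.ne h),
    fun p p' p'' h₁₂ h₁₃ h₂₃ Δ hΔ Δ' hΔ' Δ'' hΔ'' => ?_⟩
  exact inter_inter_eq_empty_of_mem_linesThrough_ratGrid hγ (hcast.ne h₁₂) (hcast.ne h₁₃)
    (hcast.ne h₂₃) hΔ hΔ' hΔ''
end
end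

section
/- Let f be a homeomorphism of the open unit disk 𝔻, let n ≥ 1 be an integer, and for each i ∈ ℤ/nℤ let z_i ∈ 𝔻 and α_i, ω_i ∈ S¹ be such that the 2n points α_i, ω_i are pairwise distinct, f^k(z_i) → α_i as k → −∞ and f^k(z_i) → ω_i as k → +∞. Set O_i = {f^m(z_i) : m ∈ ℤ}. For each i ∈ ℤ/nℤ let Γ_i : ℝ → 𝔻 be a continuous map such that for every k ∈ ℤ the restriction Γ_i|[k,k+1] is an injective parametrization of a segment γ_i^k with Γ_i(k) = f^k(z_i) and Γ_i(k+1) = f^{k+1}(z_i), where the segments γ_i^k satisfy: each γ_i^k is a translation arc for f joining f^k(z_i) to f^{k+1}(z_i); f(γ_i^k) ∩ γ_i^{k'} = ∅ for k' < k; (γ_i^k) converges to {α_i} as k → −∞ and to {ω_i} as k → +∞; γ_i^k ∩ O_i = {f^k(z_i), f^{k+1}(z_i)}; γ_i^k ∩ O_{i'} = ∅ if i' ≠ i; γ_i^k ∩ γ_{i'}^{k'} is finite if (i',k') ∉ {(i,k−1),(i,k),(i,k+1)}; and γ_i^k ∩ γ_{i'}^{k'} ∩ γ_{i''}^{k''}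 = ∅ whenever (i,k),(i',k'),(i'',k'') are pairwise distinct. Then: (1) for every i and k, Γ_i(t) = f^k(z_i) holds only for t = k; (2) no point of 𝔻 is attained by Γ_i at three distinct parameters; (3) Γ_i(ℝ) ∩ O_{i'} = ∅ if i ≠ i'; (4) Γ_i(ℝ) ∩ Γ_{i'}(ℝ) is finite if i ≠ i'; (5) if i ≠ i', no point of Γ_i(ℝ) ∩ Γ_{i'}(ℝ) is attained by Γ_i, or by Γ_{i'}, at two distinct parameters; (6) Γ_i(ℝ) ∩ Γ_{i'}(ℝ) ∩ Γ_{i''}(ℝ) = ∅ whenever i, i', i'' are pairwise distinct. (Proposition 4.4.) -/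
open Set Filter Metric Topology

noncomputable section

/-- `γ` is a segment of the disk joining `a` to `b`: the image of an injective
continuous map defined on `[0,1]` sending `0` to `a` and `1` to `b`. -/
def IsSegment (γ : Set ↥Disk) (a b : ↥Disk) : Prop :=
  ∃ g : ℝ → ↥Disk, ContinuousOn g (Set.Icc 0 1) ∧ Set.InjOn g (Set.Icc 0 1) ∧
    g 0 = a ∧ g 1 = b ∧ γ = g '' Set.Icc 0 1

/-- `γ` is a segment (with some endpoints). -/
def IsSegmentSet (γ : Set ↥Disk) : Prop := ∃ a b, IsSegment γ a b

/-- A translation arc for `f` at `z`. -/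
def IsTranslationArc (f : ↥Disk ≃ₜ ↥Disk) (z : ↥Disk) (γ : Set ↥Disk) : Prop :=
  f z ≠ z ∧ IsSegment γ z (f z) ∧
  (f (f z) = z → (⇑f '' γ) ∩ γ = {z, f z}) ∧
  (f (f z) ≠ z → (⇑f '' γ) ∩ γ = {f z})

/-- A closed disk: a subset of `Disk` homeomorphic to the closed unit disk. -/
def IsClosedDisk (D : Set ↥Disk) : Prop := Nonempty (↥D ≃ₜ ↥(Metric.closedBall (0:ℂ) 1))

/-- A `ℤ`-indexed family of subsets of the disk converges to `{p}` as `k → +∞`. -/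
def TendstoSetsTop (A : ℤ → Set ↥Disk) (p : ℂ) : Prop :=
  ∀ ε > (0 : ℝ), ∃ N : ℤ, ∀ k ≥ N, ∀ x ∈ A k, dist x.1 p < ε

/-- A `ℤ`-indexed family of subsets of the disk converges to `{p}` as `k → -∞`. -/
def TendstoSetsBot (A : ℤ → Set ↥Disk) (p : ℂ) : Prop :=
  ∀ ε > (0 : ℝ), ∃ N : ℤ, ∀ k ≤ N, ∀ x ∈ A k, dist x.1 p < ε

/-- The orbit `{f^m(z) : m ∈ ℤ}` of a point `z` of the disk. -/
def orbitSet (f : ↥Disk ≃ₜ ↥Disk) (z : ↥Disk) : Set ↥Disk :=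
  Set.range fun m : ℤ => fiter f m z

/-!
Every parameter `t` of `Γ i` lies in `[⌊t⌋, ⌊t⌋ + 1]`, so `Γ i t` lies on the arc `γ i ⌊t⌋`, and
`Γ i k` lies on both `γ i (k - 1)` and `γ i k`. As `Γ i` is injective on each `[k, k + 1]`, a point
reached at two distinct pairs (curve, parameter) lies on two distinct arcs; a third such pair, or
an integer parameter among them, puts it on three distinct arcs, which is excluded. This gives
(1), (2), (5) and (6), while (3) is the hypothesis on orbits read arc by arc.

For (4): outside finitely many indices the arcs of `Γ i` and of `Γ i'` lie in disjoint
neighbourhoods of their ends, so every meeting pair of arcs involves one of finitely many arcs.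
These form a compact subset of `𝔻`, which the arcs of both curves, converging to `S¹`, avoid
outside finitely many indices. Hence only finitely many pairs of arcs meet, each in a finite set.
-/

section Arcs

variable {X : Type*} {Γ : ℝ → X} {γ : ℤ → Set X}

lemma apply_mem_floor (hΓim : ∀ k : ℤ, γ k = Γ '' Icc (k : ℝ) (k + 1)) (t : ℝ) :
    Γ t ∈ γ ⌊t⌋ := by
  rw [hΓim]
  exact mem_image_of_mem Γ ⟨Int.floor_le t, (Int.lt_floor_add_one t).le⟩

lemma apply_intCast_mem (hΓim : ∀ k : ℤ, γ k = Γ '' Icc (k : ℝ) (k + 1)) (k : ℤ) :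
    Γ k ∈ γ k := by
  rw [hΓim]
  exact mem_image_of_mem Γ ⟨le_rfl, by linarith⟩

lemma apply_intCast_mem_sub_one (hΓim : ∀ k : ℤ, γ k = Γ '' Icc (k : ℝ) (k + 1)) (k : ℤ) :
    Γ k ∈ γ (k - 1) := by
  rw [hΓim]
  exact mem_image_of_mem Γ ⟨by push_cast; linarith, by push_cast; linarith⟩

lemma range_eq_iUnion (hΓim : ∀ k : ℤ, γ k = Γ '' Icc (k : ℝ) (k + 1)) :
    range Γ = ⋃ k, γ k := by
  refine (iUnion_subset fun k => ?_).antisymm' ?_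
  · rw [hΓim]
    exact image_subset_range Γ _
  · rintro _ ⟨t, rfl⟩
    exact mem_iUnion_of_mem _ (apply_mem_floor hΓim t)

lemma floor_ne_of_apply_eq (hΓinj : ∀ k : ℤ, InjOn Γ (Icc (k : ℝ) (k + 1))) {t s : ℝ} {k : ℤ}
    (hs : s ∈ Icc (k : ℝ) (k + 1)) (h : Γ t = Γ s) (hne : t ≠ s) : ⌊t⌋ ≠ k := by
  rintro rfl
  exact hne (hΓinj ⌊t⌋ ⟨Int.floor_le t, (Int.lt_floor_add_one t).le⟩ hs h)

lemma floor_ne_floor_of_apply_eq (hΓinj : ∀ k : ℤ, InjOn Γ (Icc (k : ℝ) (k + 1))) {t s : ℝ}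
    (h : Γ t = Γ s) (hne : t ≠ s) : ⌊t⌋ ≠ ⌊s⌋ :=
  floor_ne_of_apply_eq hΓinj ⟨Int.floor_le s, (Int.lt_floor_add_one s).le⟩ h hne

lemma range_inter_eq_empty (hΓim : ∀ k : ℤ, γ k = Γ '' Icc (k : ℝ) (k + 1)) {S : Set X}
    (h : ∀ k, γ k ∩ S = ∅) : range Γ ∩ S = ∅ := by
  rw [range_eq_iUnion hΓim, iUnion_inter, iUnion_eq_empty]
  exact h

end Arcs

section ArcFamilies

variable {X ι : Type*} {Γ : ι → ℝ → X} {γ : ι → ℤ → Set X}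

def NoTripleIntersections (γ : ι → ℤ → Set X) : Prop :=
  ∀ i k i' k' i'' k'', ((i, k) : ι × ℤ) ≠ (i', k') →
    ((i, k) : ι × ℤ) ≠ (i'', k'') → ((i', k') : ι × ℤ) ≠ (i'', k'') →
    γ i k ∩ γ i' k' ∩ γ i'' k'' = ∅

lemma eq_intCast_of_apply_eq (hΓim : ∀ i, ∀ k : ℤ, γ i k = Γ i '' Icc (k : ℝ) (k + 1))
    (hΓinj : ∀ i, ∀ k : ℤ, InjOn (Γ i) (Icc (k : ℝ) (k + 1)))
    (htriple : NoTripleIntersections γ)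
    {i : ι} {k : ℤ} {t : ℝ} (h : Γ i t = Γ i k) : t = k := by
  by_contra hne
  have hk : ⌊t⌋ ≠ k := floor_ne_of_apply_eq (hΓinj i) ⟨le_rfl, by linarith⟩ h hne
  have hk₁ : ⌊t⌋ ≠ k - 1 :=
    floor_ne_of_apply_eq (hΓinj i) ⟨by push_cast; linarith, by push_cast; linarith⟩ h hne
  have hx : Γ i t ∈ γ i ⌊t⌋ ∩ γ i k ∩ γ i (k - 1) :=
    ⟨⟨apply_mem_floor (hΓim i) t, h ▸ apply_intCast_mem (hΓim i) k⟩,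
      h ▸ apply_intCast_mem_sub_one (hΓim i) k⟩
  rwa [htriple _ _ _ _ _ _ (by simpa using hk) (by simpa using hk₁) (by simp; omega)] at hx

lemma eq_or_eq_or_eq_of_apply_eq_apply
    (hΓim : ∀ i, ∀ k : ℤ, γ i k = Γ i '' Icc (k : ℝ) (k + 1))
    (hΓinj : ∀ i, ∀ k : ℤ, InjOn (Γ i) (Icc (k : ℝ) (k + 1)))
    (htriple : NoTripleIntersections γ)
    {i : ι} {t₁ t₂ t₃ : ℝ} (h₁₂ : Γ i t₁ = Γ i t₂) (h₁₃ : Γ i t₁ = Γ i t₃) :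
    t₁ = t₂ ∨ t₁ = t₃ ∨ t₂ = t₃ := by
  by_contra! hne
  obtain ⟨hne₁₂, hne₁₃, hne₂₃⟩ := hne
  have hx : Γ i t₁ ∈ γ i ⌊t₁⌋ ∩ γ i ⌊t₂⌋ ∩ γ i ⌊t₃⌋ :=
    ⟨⟨apply_mem_floor (hΓim i) t₁, h₁₂ ▸ apply_mem_floor (hΓim i) t₂⟩,
      h₁₃ ▸ apply_mem_floor (hΓim i) t₃⟩
  rwa [htriple _ _ _ _ _ _ (by simpa using floor_ne_floor_of_apply_eq (hΓinj i) h₁₂ hne₁₂)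
    (by simpa using floor_ne_floor_of_apply_eq (hΓinj i) h₁₃ hne₁₃)
    (by simpa using floor_ne_floor_of_apply_eq (hΓinj i) (h₁₂ ▸ h₁₃) hne₂₃)] at hx

lemma eq_of_apply_eq_apply_of_mem_range
    (hΓim : ∀ i, ∀ k : ℤ, γ i k = Γ i '' Icc (k : ℝ) (k + 1))
    (hΓinj : ∀ i, ∀ k : ℤ, InjOn (Γ i) (Icc (k : ℝ) (k + 1)))
    (htriple : NoTripleIntersections γ)
    {i i' : ι} (hii' : i ≠ i') {t t' : ℝ} (h : Γ i t = Γ i t') (hx : Γ i t ∈ range (Γ i')) :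
    t = t' := by
  by_contra hne
  obtain ⟨s, hs⟩ := hx
  have hx : Γ i t ∈ γ i ⌊t⌋ ∩ γ i ⌊t'⌋ ∩ γ i' ⌊s⌋ :=
    ⟨⟨apply_mem_floor (hΓim i) t, h ▸ apply_mem_floor (hΓim i) t'⟩,
      hs ▸ apply_mem_floor (hΓim i') s⟩
  rwa [htriple _ _ _ _ _ _ (by simpa using floor_ne_floor_of_apply_eq (hΓinj i) h hne)
    (by simp [hii']) (by simp [hii'])] at hx

lemma range_inter_range_inter_range_eq_empty
    (hΓim : ∀ i, ∀ k : ℤ, γ i k = Γ i '' Icc (k : ℝ) (k + 1))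
    (htriple : NoTripleIntersections γ)
    {i i' i'' : ι} (h₁ : i ≠ i') (h₂ : i ≠ i'') (h₃ : i' ≠ i'') :
    range (Γ i) ∩ range (Γ i') ∩ range (Γ i'') = ∅ := by
  refine eq_empty_of_forall_notMem ?_
  rintro _ ⟨⟨⟨t, rfl⟩, ⟨s, hs⟩⟩, ⟨u, hu⟩⟩
  have hx : Γ i t ∈ γ i ⌊t⌋ ∩ γ i' ⌊s⌋ ∩ γ i'' ⌊u⌋ :=
    ⟨⟨apply_mem_floor (hΓim i) t, hs ▸ apply_mem_floor (hΓim i') s⟩,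
      hu ▸ apply_mem_floor (hΓim i'') u⟩
  rwa [htriple _ _ _ _ _ _ (by simp [h₁]) (by simp [h₂]) (by simp [h₃])] at hx

end ArcFamilies

lemma finite_iUnion_inter_iUnion {X : Type*} {γ γ' : ℤ → Set X}
    (hpairs : {p : ℤ × ℤ | (γ p.1 ∩ γ' p.2).Nonempty}.Finite)
    (hfin : ∀ k k', (γ k ∩ γ' k').Finite) : ((⋃ k, γ k) ∩ ⋃ k, γ' k).Finite := by
  refine (hpairs.biUnion fun p _ => hfin p.1 p.2).subset ?_
  rintro x ⟨hx, hx'⟩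
  obtain ⟨k, hk⟩ := mem_iUnion.1 hx
  obtain ⟨k', hk'⟩ := mem_iUnion.1 hx'
  exact mem_biUnion (x := (k, k')) ⟨x, hk, hk'⟩ ⟨hk, hk'⟩

section SetsConvergingToBoundary

variable {γ γ' : ℤ → Set ↥Disk} {a w a' w' : ℂ}

lemma TendstoSetsBot.eventually_subset (h : TendstoSetsBot γ a) {U : Set ℂ} (hU : U ∈ 𝓝 a) :
    ∀ᶠ k in atBot, γ k ⊆ Subtype.val ⁻¹' U := by
  obtain ⟨ε, hε, hball⟩ := Metric.mem_nhds_iff.1 hU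
  obtain ⟨N, hN⟩ := h ε hε
  exact eventually_atBot.2 ⟨N, fun k hk x hx => hball (hN k hk x hx)⟩

lemma TendstoSetsTop.eventually_subset (h : TendstoSetsTop γ w) {U : Set ℂ} (hU : U ∈ 𝓝 w) :
    ∀ᶠ k in atTop, γ k ⊆ Subtype.val ⁻¹' U := by
  obtain ⟨ε, hε, hball⟩ := Metric.mem_nhds_iff.1 hU
  obtain ⟨N, hN⟩ := h ε hε
  exact eventually_atTop.2 ⟨N, fun k hk x hx => hball (hN k hk x hx)⟩

lemma finite_setOf_not_subset (hbot : TendstoSetsBot γ a) (htop : TendstoSetsTop γ w)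
    {U : Set ℂ} (ha : U ∈ 𝓝 a) (hw : U ∈ 𝓝 w) :
    {k | ¬γ k ⊆ Subtype.val ⁻¹' U}.Finite := by
  rw [← eventually_cofinite, Int.cofinite_eq, eventually_sup]
  exact ⟨hbot.eventually_subset ha, htop.eventually_subset hw⟩

lemma compl_image_val_mem_nhds {K : Set ↥Disk} (hK : IsCompact K) {a : ℂ} (ha : a ∉ Disk) :
    (Subtype.val '' K)ᶜ ∈ 𝓝 a :=
  (hK.image continuous_subtype_val).isClosed.compl_mem_nhds fun ⟨x, _, hx⟩ => ha (hx ▸ x.2)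

lemma finite_setOf_inter_nonempty (hcpt : ∀ k, IsCompact (γ k)) (hcpt' : ∀ k, IsCompact (γ' k))
    (hbot : TendstoSetsBot γ a) (htop : TendstoSetsTop γ w)
    (hbot' : TendstoSetsBot γ' a') (htop' : TendstoSetsTop γ' w')
    (ha : a ∉ Disk) (hw : w ∉ Disk) (ha' : a' ∉ Disk) (hw' : w' ∉ Disk)
    (hdisj : Disjoint ({a, w} : Set ℂ) {a', w'}) :
    {p : ℤ × ℤ | (γ p.1 ∩ γ' p.2).Nonempty}.Finite := by
  obtain ⟨U, U', hUo, hU'o, hU, hU', hUU'⟩ :=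
    SeparatedNhds.of_isCompact_isCompact (toFinite _).isCompact (toFinite _).isCompact hdisj
  set A := {k | ¬γ k ⊆ Subtype.val ⁻¹' U}
  set A' := {k | ¬γ' k ⊆ Subtype.val ⁻¹' U'}
  have hA : A.Finite := finite_setOf_not_subset hbot htop
    (hUo.mem_nhds (hU (by simp))) (hUo.mem_nhds (hU (by simp)))
  have hA' : A'.Finite := finite_setOf_not_subset hbot' htop'
    (hU'o.mem_nhds (hU' (by simp))) (hU'o.mem_nhds (hU' (by simp)))
  set K := (⋃ k ∈ A, γ k) ∪ ⋃ k ∈ A', γ' k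
  have hK : IsCompact K := (hA.isCompact_biUnion fun k _ => hcpt k).union
    (hA'.isCompact_biUnion fun k _ => hcpt' k)
  set B := {k | ¬γ k ⊆ Subtype.val ⁻¹' (Subtype.val '' K)ᶜ}
  set B' := {k | ¬γ' k ⊆ Subtype.val ⁻¹' (Subtype.val '' K)ᶜ}
  have hB : B.Finite := finite_setOf_not_subset hbot htop
    (compl_image_val_mem_nhds hK ha) (compl_image_val_mem_nhds hK hw)
  have hB' : B'.Finite := finite_setOf_not_subset hbot' htop'
    (compl_image_val_mem_nhds hK ha') (compl_image_val_mem_nhds hK hw')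
  have hmeets {S : Set ↥Disk} {x : ↥Disk} (hxS : x ∈ S) (hxK : x ∈ K) :
      ¬S ⊆ Subtype.val ⁻¹' (Subtype.val '' K)ᶜ :=
    fun hS => hS hxS ⟨x, hxK, rfl⟩
  refine ((hA.union hB).prod (hA'.union hB')).subset ?_
  rintro ⟨k, k'⟩ ⟨x, hx, hx'⟩
  by_cases hk : k ∈ A
  · exact ⟨.inl hk, .inr (hmeets hx' (.inl (mem_biUnion hk hx)))⟩
  by_cases hk' : k' ∈ A'
  · exact ⟨.inr (hmeets hx (.inr (mem_biUnion hk' hx'))), .inl hk'⟩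
  exact (hUU'.ne_of_mem (not_not.1 hk hx) (not_not.1 hk' hx') rfl).elim

end SetsConvergingToBoundary

theorem handel_prop_4_4_general (f : ↥Disk ≃ₜ ↥Disk) (n : ℕ)
    (z : ZMod n → ↥Disk) (α ω : ZMod n → ℂ)
    (hα : ∀ i, α i ∈ Metric.sphere (0:ℂ) 1) (hω : ∀ i, ω i ∈ Metric.sphere (0:ℂ) 1)
    (hαinj : Function.Injective α) (hωinj : Function.Injective ω)
    (hαω : ∀ i j, α i ≠ ω j)
    (Γ : ZMod n → ℝ → ↥Disk) (hcont : ∀ i, Continuous (Γ i))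
    (γ : ZMod n → ℤ → Set ↥Disk)
    (hΓim : ∀ i, ∀ k : ℤ, γ i k = Γ i '' Set.Icc (k : ℝ) (k + 1))
    (hΓinj : ∀ i, ∀ k : ℤ, Set.InjOn (Γ i) (Set.Icc (k : ℝ) (k + 1)))
    (hΓk : ∀ i, ∀ k : ℤ, Γ i (k : ℝ) = fiter f k (z i))
    (hconvₘ : ∀ i, TendstoSetsBot (γ i) (α i))
    (hconvₚ : ∀ i, TendstoSetsTop (γ i) (ω i))
    (horb₂ : ∀ i i' k, i' ≠ i → γ i k ∩ orbitSet f (z i') = ∅)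
    (hfin : ∀ i k i' k', ((i', k') : ZMod n × ℤ) ≠ (i, k - 1) →
      ((i', k') : ZMod n × ℤ) ≠ (i, k) → ((i', k') : ZMod n × ℤ) ≠ (i, k + 1) →
      (γ i k ∩ γ i' k').Finite)
    (htriple : ∀ i k i' k' i'' k'', ((i, k) : ZMod n × ℤ) ≠ (i', k') →
      ((i, k) : ZMod n × ℤ) ≠ (i'', k'') → ((i', k') : ZMod n × ℤ) ≠ (i'', k'') →
      γ i k ∩ γ i' k' ∩ γ i'' k'' = ∅) :
    (∀ i, ∀ k : ℤ, ∀ t : ℝ, Γ i t = fiter f k (z i) → t = k) ∧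
    (∀ i, ∀ t₁ t₂ t₃ : ℝ, Γ i t₁ = Γ i t₂ → Γ i t₁ = Γ i t₃ →
      t₁ = t₂ ∨ t₁ = t₃ ∨ t₂ = t₃) ∧
    (∀ i i', i ≠ i' → Set.range (Γ i) ∩ orbitSet f (z i') = ∅) ∧
    (∀ i i', i ≠ i' → (Set.range (Γ i) ∩ Set.range (Γ i')).Finite) ∧
    (∀ i i', i ≠ i' → ∀ x ∈ Set.range (Γ i) ∩ Set.range (Γ i'),
      (∀ t t' : ℝ, Γ i t = x → Γ i t' = x → t = t') ∧
      (∀ s s' : ℝ, Γ i' s = x → Γ i' s' = x → s = s')) ∧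
    (∀ i i' i'', i ≠ i' → i ≠ i'' → i' ≠ i'' →
      Set.range (Γ i) ∩ Set.range (Γ i') ∩ Set.range (Γ i'') = ∅) := by
  have hnotDisk : ∀ c ∈ sphere (0 : ℂ) 1, c ∉ Disk := fun _ hc =>
    sphere_disjoint_ball.notMem_of_mem_left hc
  refine ⟨fun i k t h => eq_intCast_of_apply_eq hΓim hΓinj htriple (h.trans (hΓk i k).symm),
    fun i _ _ _ => eq_or_eq_or_eq_of_apply_eq_apply hΓim hΓinj htriple,
    fun i i' hii' => range_inter_eq_empty (hΓim i) fun k => horb₂ i i' k hii'.symm,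
    fun i i' hii' => ?_,
    fun i i' hii' x ⟨hx, hx'⟩ =>
      ⟨fun t t' ht ht' => eq_of_apply_eq_apply_of_mem_range hΓim hΓinj htriple hii'
          (ht.trans ht'.symm) (ht ▸ hx'),
        fun s s' hs hs' => eq_of_apply_eq_apply_of_mem_range hΓim hΓinj htriple hii'.symm
          (hs.trans hs'.symm) (hs ▸ hx)⟩,
    fun i i' i'' => range_inter_range_inter_range_eq_empty hΓim htriple⟩
  have hcpt : ∀ i k, IsCompact (γ i k) := fun i k =>
    hΓim i k ▸ isCompact_Icc.image (hcont i)
  have hends : Disjoint ({α i, ω i} : Set ℂ) {α i', ω i'} := by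
    simp [hαinj.ne hii'.symm, hωinj.ne hii'.symm, hαω, (hαω _ _).symm]
  rw [range_eq_iUnion (hΓim i), range_eq_iUnion (hΓim i')]
  refine finite_iUnion_inter_iUnion (finite_setOf_inter_nonempty (hcpt i) (hcpt i')
    (hconvₘ i) (hconvₚ i) (hconvₘ i') (hconvₚ i') (hnotDisk _ (hα i)) (hnotDisk _ (hω i))
    (hnotDisk _ (hα i')) (hnotDisk _ (hω i')) hends)
    fun k k' => hfin i k i' k' (by simp [hii'.symm]) (by simp [hii'.symm]) (by simp [hii'.symm])

/-- Proposition 4.4. -/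
theorem handel_prop_4_4 (f : ↥Disk ≃ₜ ↥Disk) (n : ℕ) (hn : 1 ≤ n)
    (z : ZMod n → ↥Disk) (α ω : ZMod n → ℂ)
    (hα : ∀ i, α i ∈ Metric.sphere (0:ℂ) 1) (hω : ∀ i, ω i ∈ Metric.sphere (0:ℂ) 1)
    (hαinj : Function.Injective α) (hωinj : Function.Injective ω)
    (hαω : ∀ i j, α i ≠ ω j)
    (hlimₘ : ∀ i, Tendsto (fun k : ℤ => (fiter f k (z i)).1) atBot (nhds (α i)))
    (hlimₚ : ∀ i, Tendsto (fun k : ℤ => (fiter f k (z i)).1) atTop (nhds (ω i)))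
    (Γ : ZMod n → ℝ → ↥Disk) (hcont : ∀ i, Continuous (Γ i))
    (γ : ZMod n → ℤ → Set ↥Disk)
    (hΓim : ∀ i, ∀ k : ℤ, γ i k = Γ i '' Set.Icc (k : ℝ) (k + 1))
    (hΓinj : ∀ i, ∀ k : ℤ, Set.InjOn (Γ i) (Set.Icc (k : ℝ) (k + 1)))
    (hΓk : ∀ i, ∀ k : ℤ, Γ i (k : ℝ) = fiter f k (z i))
    (harc : ∀ i k, IsTranslationArc f (fiter f k (z i)) (γ i k))
    (hpast : ∀ i, ∀ k k' : ℤ, k' < k → (⇑f '' γ i k) ∩ γ i k' = ∅)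
    (hconvₘ : ∀ i, TendstoSetsBot (γ i) (α i))
    (hconvₚ : ∀ i, TendstoSetsTop (γ i) (ω i))
    (horb₁ : ∀ i k, γ i k ∩ orbitSet f (z i) = {fiter f k (z i), fiter f (k + 1) (z i)})
    (horb₂ : ∀ i i' k, i' ≠ i → γ i k ∩ orbitSet f (z i') = ∅)
    (hfin : ∀ i k i' k', ((i', k') : ZMod n × ℤ) ≠ (i, k - 1) →
      ((i', k') : ZMod n × ℤ) ≠ (i, k) → ((i', k') : ZMod n × ℤ) ≠ (i, k + 1) →
      (γ i k ∩ γ i' k').Finite)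
    (htriple : ∀ i k i' k' i'' k'', ((i, k) : ZMod n × ℤ) ≠ (i', k') →
      ((i, k) : ZMod n × ℤ) ≠ (i'', k'') → ((i', k') : ZMod n × ℤ) ≠ (i'', k'') →
      γ i k ∩ γ i' k' ∩ γ i'' k'' = ∅) :
    (∀ i, ∀ k : ℤ, ∀ t : ℝ, Γ i t = fiter f k (z i) → t = k) ∧
    (∀ i, ∀ t₁ t₂ t₃ : ℝ, Γ i t₁ = Γ i t₂ → Γ i t₁ = Γ i t₃ →
      t₁ = t₂ ∨ t₁ = t₃ ∨ t₂ = t₃) ∧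
    (∀ i i', i ≠ i' → Set.range (Γ i) ∩ orbitSet f (z i') = ∅) ∧
    (∀ i i', i ≠ i' → (Set.range (Γ i) ∩ Set.range (Γ i')).Finite) ∧
    (∀ i i', i ≠ i' → ∀ x ∈ Set.range (Γ i) ∩ Set.range (Γ i'),
      (∀ t t' : ℝ, Γ i t = x → Γ i t' = x → t = t') ∧
      (∀ s s' : ℝ, Γ i' s = x → Γ i' s' = x → s = s')) ∧
    (∀ i i' i'', i ≠ i' → i ≠ i'' → i' ≠ i'' →
      Set.range (Γ i) ∩ Set.range (Γ i') ∩ Set.range (Γ i'') = ∅) :=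
  handel_prop_4_4_general f n z α ω hα hω hαinj hωinj hαω Γ hcont γ hΓim hΓinj hΓk hconvₘ hconvₚ
    horb₂ hfin htriple
end
end

section
/- Define h : ℂ → 𝔻 by h(z) = z/(1+|z|); h is a homeomorphism from ℂ onto the open unit disk 𝔻. Let f : ℂ → ℂ be a homeomorphism such that sup_{z∈ℂ} |f(z) − z| < ∞ (f − Id is bounded). Then there exists a homeomorphism g of the closed unit disk {w ∈ ℂ : |w| ≤ 1} onto itself such that g(w) = h(f(h⁻¹(w))) for every w with |w| < 1 and g(w) = w for every w with |w| = 1. (Claim proved in the genus-one case of the proof of Theorem 0.3: if f − Id is bounded, then the conjugate of f by h extends to the closed disk by the identity on the boundary circle.) -/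
open Set Metric Complex

noncomputable section

/-- The map `h : z ↦ z / (1 + |z|)`. -/
def hmap (z : ℂ) : ℂ := z / (1 + ‖z‖)

/-!
Since `1 + ‖hmap⁻¹ w‖ = (1 - ‖w‖)⁻¹` and `‖hmap z' - hmap z‖ ≤ 2 ‖z' - z‖ / (1 + ‖z‖)`, conjugating
by `hmap` turns the displacement bound `‖f z - z‖ ≤ C` into `‖g w - w‖ ≤ 2 C (1 - ‖w‖)` on the open
disk. Hence `g`, extended by the identity on the unit circle, is continuous on the closed disk; its
inverse is the same construction for `f⁻¹`, and a continuous bijection of the compact disk is a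
homeomorphism.
-/

open Filter Topology

def hmapInv (w : ℂ) : ℂ := w / (1 - ‖w‖)

lemma hmap_eq_div_ofReal (z : ℂ) : hmap z = z / ((1 + ‖z‖ : ℝ) : ℂ) := by
  simp [hmap]

lemma hmapInv_eq_div_ofReal (w : ℂ) : hmapInv w = w / ((1 - ‖w‖ : ℝ) : ℂ) := by
  simp [hmapInv]

lemma norm_hmap (z : ℂ) : ‖hmap z‖ = ‖z‖ / (1 + ‖z‖) := by
  rw [hmap_eq_div_ofReal, norm_div, Complex.norm_real, Real.norm_of_nonneg (by positivity)]

lemma norm_hmap_lt_one (z : ℂ) : ‖hmap z‖ < 1 := by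
  rw [norm_hmap, div_lt_one (by positivity)]
  linarith

lemma norm_hmapInv {w : ℂ} (hw : ‖w‖ < 1) : ‖hmapInv w‖ = ‖w‖ / (1 - ‖w‖) := by
  rw [hmapInv_eq_div_ofReal, norm_div, Complex.norm_real, Real.norm_of_nonneg (by linarith)]

lemma one_add_norm_hmapInv {w : ℂ} (hw : ‖w‖ < 1) : 1 + ‖hmapInv w‖ = (1 - ‖w‖)⁻¹ := by
  have : 1 - ‖w‖ ≠ 0 := by linarith
  rw [norm_hmapInv hw]
  field_simp
  ring

lemma hmapInv_hmap (z : ℂ) : hmapInv (hmap z) = z := by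
  have : (1 : ℝ) + ‖z‖ ≠ 0 := by positivity
  have hden : 1 - ‖hmap z‖ = (1 + ‖z‖)⁻¹ := by
    rw [norm_hmap]
    field_simp
    ring
  rw [hmapInv_eq_div_ofReal, hden, hmap_eq_div_ofReal, Complex.ofReal_inv, div_div,
    mul_inv_cancel₀ (by exact_mod_cast this), div_one]

lemma hmap_hmapInv {w : ℂ} (hw : ‖w‖ < 1) : hmap (hmapInv w) = w := by
  have : (1 : ℝ) - ‖w‖ ≠ 0 := by linarith
  rw [hmap_eq_div_ofReal, one_add_norm_hmapInv hw, hmapInv_eq_div_ofReal, Complex.ofReal_inv,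
    div_div, mul_inv_cancel₀ (by exact_mod_cast this), div_one]

lemma continuous_hmap : Continuous hmap := by
  rw [funext hmap_eq_div_ofReal]
  exact continuous_id.div (by fun_prop) fun z ↦ Complex.ofReal_ne_zero.mpr (by positivity)

lemma continuousOn_hmapInv : ContinuousOn hmapInv Disk := by
  rw [funext hmapInv_eq_div_ofReal]
  refine continuousOn_id.div (by fun_prop) fun w hw ↦ Complex.ofReal_ne_zero.mpr ?_
  have : ‖w‖ < 1 := mem_ball_zero_iff.mp hw
  linarith

def hmapHomeomorph : ℂ ≃ₜ Disk where
  toFun z := ⟨hmap z, mem_ball_zero_iff.mpr (norm_hmap_lt_one z)⟩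
  invFun w := hmapInv w
  left_inv := hmapInv_hmap
  right_inv w := Subtype.ext (hmap_hmapInv (mem_ball_zero_iff.mp w.2))
  continuous_toFun := continuous_hmap.subtype_mk _
  continuous_invFun := continuousOn_hmapInv.domRestrict

lemma norm_hmap_sub_hmap_le (z z' : ℂ) :
    ‖hmap z' - hmap z‖ ≤ 2 * ‖z' - z‖ / (1 + ‖z‖) := by
  have ha : 0 < 1 + ‖z‖ := by positivity
  have ha' : 0 < 1 + ‖z'‖ := by positivity
  have hsplit : hmap z' - hmap z = (z' - z) / ((1 + ‖z‖ : ℝ) : ℂ)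
      + z' * ((‖z‖ - ‖z'‖ : ℝ) : ℂ) / ((1 + ‖z‖ : ℝ) * (1 + ‖z'‖ : ℝ) : ℝ) := by
    have : (1 : ℂ) + ‖z‖ ≠ 0 := by exact_mod_cast ha.ne'
    have : (1 : ℂ) + ‖z'‖ ≠ 0 := by exact_mod_cast ha'.ne'
    simp only [hmap]
    push_cast
    field_simp
    ring
  have hnorm : |‖z‖ - ‖z'‖| ≤ ‖z' - z‖ := by
    rw [abs_sub_comm]
    exact abs_norm_sub_norm_le z' z
  have hsecond : ‖z' * ((‖z‖ - ‖z'‖ : ℝ) : ℂ) / ((1 + ‖z‖ : ℝ) * (1 + ‖z'‖ : ℝ) : ℝ)‖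
      ≤ ‖z' - z‖ / (1 + ‖z‖) := by
    rw [norm_div, norm_mul, Complex.norm_real, Complex.norm_real, Real.norm_eq_abs,
      Real.norm_of_nonneg (by positivity), div_le_div_iff₀ (by positivity) ha]
    have : ‖z'‖ * |‖z‖ - ‖z'‖| ≤ (1 + ‖z'‖) * ‖z' - z‖ :=
      mul_le_mul (by linarith) hnorm (abs_nonneg _) ha'.le
    nlinarith
  calc ‖hmap z' - hmap z‖
      ≤ ‖z' - z‖ / (1 + ‖z‖) + ‖z' - z‖ / (1 + ‖z‖) := by
        rw [hsplit]
        refine (norm_add_le _ _).trans (add_le_add ?_ hsecond)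
        rw [norm_div, Complex.norm_real, Real.norm_of_nonneg ha.le]
    _ = 2 * ‖z' - z‖ / (1 + ‖z‖) := by ring

def diskConj (f : ℂ → ℂ) (w : ℂ) : ℂ :=
  if ‖w‖ < 1 then hmap (f (hmapInv w)) else w

section diskConj

variable {f : ℂ → ℂ}

lemma diskConj_of_norm_lt_one {w : ℂ} (hw : ‖w‖ < 1) : diskConj f w = hmap (f (hmapInv w)) :=
  if_pos hw

lemma diskConj_of_one_le_norm {w : ℂ} (hw : 1 ≤ ‖w‖) : diskConj f w = w :=
  if_neg hw.not_gt

lemma diskConj_hmap (z : ℂ) : diskConj f (hmap z) = hmap (f z) := by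
  rw [diskConj_of_norm_lt_one (norm_hmap_lt_one z), hmapInv_hmap]

lemma mapsTo_diskConj : MapsTo (diskConj f) (closedBall 0 1) (closedBall 0 1) := by
  intro w hw
  rcases lt_or_ge ‖w‖ 1 with hlt | hge
  · rw [diskConj_of_norm_lt_one hlt, mem_closedBall_zero_iff]
    exact (norm_hmap_lt_one _).le
  · rwa [diskConj_of_one_le_norm hge]

lemma diskConj_diskConj {g : ℂ → ℂ} (hgf : Function.LeftInverse g f) (w : ℂ) :
    diskConj g (diskConj f w) = w := by
  rcases lt_or_ge ‖w‖ 1 with hlt | hge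
  · rw [diskConj_of_norm_lt_one hlt, diskConj_hmap, hgf, hmap_hmapInv hlt]
  · rw [diskConj_of_one_le_norm hge, diskConj_of_one_le_norm hge]

lemma norm_diskConj_sub_le {C : ℝ} (hC : ∀ z, ‖f z - z‖ ≤ C) {w : ℂ} (hw : ‖w‖ ≤ 1) :
    ‖diskConj f w - w‖ ≤ 2 * C * (1 - ‖w‖) := by
  rcases hw.lt_or_eq with hlt | heq
  · calc ‖diskConj f w - w‖ = ‖hmap (f (hmapInv w)) - hmap (hmapInv w)‖ := by
          rw [diskConj_of_norm_lt_one hlt, hmap_hmapInv hlt]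
      _ ≤ 2 * ‖f (hmapInv w) - hmapInv w‖ / (1 + ‖hmapInv w‖) := norm_hmap_sub_hmap_le _ _
      _ ≤ 2 * C / (1 + ‖hmapInv w‖) := by gcongr; exact hC _
      _ = 2 * C * (1 - ‖w‖) := by rw [one_add_norm_hmapInv hlt, div_inv_eq_mul]
  · simp [diskConj_of_one_le_norm heq.ge, heq]

lemma continuousAt_diskConj_of_norm_lt_one (hf : Continuous f) {w : ℂ} (hw : ‖w‖ < 1) :
    ContinuousAt (diskConj f) w := by
  have hDisk : Disk ∈ 𝓝 w := isOpen_ball.mem_nhds (mem_ball_zero_iff.mpr hw)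
  have hconj : ContinuousAt (fun x ↦ hmap (f (hmapInv x))) w :=
    continuous_hmap.continuousAt.comp <| hf.continuousAt.comp <|
      continuousOn_hmapInv.continuousAt hDisk
  refine hconj.congr ?_
  filter_upwards [hDisk] with x hx
  exact (diskConj_of_norm_lt_one (mem_ball_zero_iff.mp hx)).symm

lemma continuousWithinAt_diskConj_of_norm_eq_one {C : ℝ} (hC : ∀ z, ‖f z - z‖ ≤ C) {w : ℂ}
    (hw : ‖w‖ = 1) : ContinuousWithinAt (diskConj f) (closedBall 0 1) w := by
  have hbound : Tendsto (fun x : ℂ ↦ 2 * C * (1 - ‖x‖)) (𝓝[closedBall 0 1] w) (𝓝 0) := by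
    have : Tendsto (fun x : ℂ ↦ 2 * C * (1 - ‖x‖)) (𝓝 w) (𝓝 (2 * C * (1 - ‖w‖))) :=
      (by fun_prop : Continuous fun x : ℂ ↦ 2 * C * (1 - ‖x‖)).tendsto w
    rw [hw, sub_self, mul_zero] at this
    exact this.mono_left nhdsWithin_le_nhds
  have hsub : Tendsto (fun x ↦ diskConj f x - x) (𝓝[closedBall 0 1] w) (𝓝 0) := by
    refine squeeze_zero_norm' ?_ hbound
    filter_upwards [self_mem_nhdsWithin] with x hx
    exact norm_diskConj_sub_le hC (mem_closedBall_zero_iff.mp hx)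
  have hid : Tendsto id (𝓝[closedBall 0 1] w) (𝓝 w) := tendsto_id.mono_left nhdsWithin_le_nhds
  simpa [ContinuousWithinAt, diskConj_of_one_le_norm hw.ge] using hsub.add hid

lemma continuousOn_diskConj (hf : Continuous f) {C : ℝ} (hC : ∀ z, ‖f z - z‖ ≤ C) :
    ContinuousOn (diskConj f) (closedBall 0 1) := by
  intro w hw
  rcases (mem_closedBall_zero_iff.mp hw).lt_or_eq with hlt | heq
  · exact (continuousAt_diskConj_of_norm_lt_one hf hlt).continuousWithinAt
  · exact continuousWithinAt_diskConj_of_norm_eq_one hC heq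

end diskConj

def diskConjEquiv (f : ℂ ≃ ℂ) : closedBall (0 : ℂ) 1 ≃ closedBall (0 : ℂ) 1 where
  toFun w := ⟨diskConj f w, mapsTo_diskConj w.2⟩
  invFun w := ⟨diskConj f.symm w, mapsTo_diskConj w.2⟩
  left_inv w := Subtype.ext (diskConj_diskConj f.left_inv w)
  right_inv w := Subtype.ext (diskConj_diskConj f.right_inv w)

/-- Claim proved in the genus-one case of the proof of Theorem 0.3. -/
theorem handel_thm_0_3_genus_one (f : ℂ ≃ₜ ℂ)
    (hbd : ∃ C : ℝ, ∀ z : ℂ, ‖f z - z‖ ≤ C) :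
    (∃ H : ℂ ≃ₜ ↥Disk, ∀ z : ℂ, (H z).1 = hmap z) ∧
    ∃ g : ↥(Metric.closedBall (0:ℂ) 1) ≃ₜ ↥(Metric.closedBall (0:ℂ) 1),
      (∀ w : ↥(Metric.closedBall (0:ℂ) 1), ‖w.1‖ = 1 → (g w).1 = w.1) ∧
      (∀ z : ℂ, ∀ w : ↥(Metric.closedBall (0:ℂ) 1), w.1 = hmap z →
        (g w).1 = hmap (f z)) := by
  obtain ⟨C, hC⟩ := hbd
  have hcont : Continuous (diskConjEquiv f.toEquiv) :=
    (continuousOn_diskConj f.continuous hC).domRestrict.subtype_mk _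
  refine ⟨⟨hmapHomeomorph, fun _ ↦ rfl⟩, hcont.homeoOfEquivCompactToT2, ?_, ?_⟩
  · intro w hw
    exact diskConj_of_one_le_norm hw.ge
  · intro z w hw
    exact (congrArg (diskConj f) hw).trans (diskConj_hmap z)
end
end
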